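/- Let Y = (Y¹,…,Yᵐ) be an exchangeable random vector in ℝᵐ with finite p-th moments (p ≥ 1), let μ ∈ P(ℝ) with finite p-th moment, and let n ≤ m with m = kn + ℓ, 0 ≤ ℓ ≤ n−1. Then (1/2^{p−1})·E[W_p^p(μ̂_Y, μ)] ≤ (kn/m)·(W_p^p(Law^n(Y), μ^{⊗n}) + ε_{n,p}(μ)) + (ℓ/m)·(W_p^p(Law^ℓ(Y), μ^{⊗ℓ}) + ε_{ℓ,p}(μ)), where Law^j(Y) denotes the joint law of the first j components of Y, μ̂_Y is the empirical measure, and ε_{j,p}(μ) = E[W_p^p((1/j)∑ᵢ δ_{Zⁱ}, μ)] for Z¹,…,Zʲ i.i.d. ∼ μ (with the ℓ = 0 terms interpreted as zero). -/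

import Mathlib

open MeasureTheory ENNReal

/-- `W_p^p` on `P(ℝ)` with cost `|x-y|^p`: infimum over couplings. -/
noncomputable def WppR (p : ℝ) (μ ν : Measure ℝ) : ℝ≥0∞ :=
  ⨅ (π : Measure (ℝ × ℝ)) (_ : π.map Prod.fst = μ ∧ π.map Prod.snd = ν),
    ∫⁻ z, ENNReal.ofReal (|z.1 - z.2| ^ p) ∂π

/-- `W_p^p` on `P(ℝⁿ)` with respect to the normalized cost
`d_{n,p}(x,y)^p = (1/n)∑ᵢ |xⁱ-yⁱ|^p`. -/
noncomputable def WppVec (p : ℝ) (n : ℕ) (μ ν : Measure (Fin n → ℝ)) : ℝ≥0∞ :=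
  ⨅ (π : Measure ((Fin n → ℝ) × (Fin n → ℝ)))
    (_ : π.map Prod.fst = μ ∧ π.map Prod.snd = ν),
      ∫⁻ z, ENNReal.ofReal ((n : ℝ)⁻¹ * ∑ i, |z.1 i - z.2 i| ^ p) ∂π

/-- The empirical measure `(1/N)·∑ᵢ δ_{x i}`. -/
noncomputable def empMeas (N : ℕ) (x : Fin N → ℝ) : Measure ℝ :=
  (N : ℝ≥0∞)⁻¹ • ∑ i, Measure.dirac (x i)

/-- `ε_{n,p}(μ) = E[W_p^p((1/n)∑ δ_{Zⁱ}, μ)]` for `Z¹,…,Zⁿ` i.i.d. with law `μ`. -/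
noncomputable def epsNp (p : ℝ) (n : ℕ) (μ : Measure ℝ) : ℝ≥0∞ :=
  ∫⁻ z : Fin n → ℝ, WppR p (empMeas n z) μ ∂(Measure.pi fun _ : Fin n => μ)

/-!
Split the `m` coordinates of `Y` into `k` blocks of length `n` and a tail of length `ℓ`. The
empirical measure of `Y` is the corresponding mixture of the block empirical measures, and
`W_p^p(·, μ)` is convex under such mixtures (mix the couplings); by exchangeability every block has
the law of the first `n` (resp. `ℓ`) coordinates. For a single block, gluing a coupling of `μ̂_z`
and `μ` to the points `y` along the common index gives the triangle inequality
`W_p(μ̂_y, μ) ≤ d_{n,p}(y, z) + W_p(μ̂_z, μ)`. Raising it to the power `p` costs the factor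
`2^{p-1}`, and integrating it against a coupling of `Lawⁿ(Y)` and `μ^{⊗n}` produces the two
terms `W_p^p(Lawⁿ(Y), μ^{⊗n})` and `ε_{n,p}(μ)`.
-/

lemma ENNReal.iInf_rpow {ι : Sort*} (f : ι → ℝ≥0∞) {q : ℝ} (hq : 0 < q) :
    (⨅ i, f i) ^ q = ⨅ i, f i ^ q :=
  (ENNReal.orderIsoRpow q hq).map_iInf f

lemma Equiv.Perm.exists_comp_eq_of_injective {α β : Type*} [Finite β] {f g : α → β}
    (hf : f.Injective) (hg : g.Injective) : ∃ σ : Equiv.Perm β, σ ∘ g = f := by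
  classical
  have := Fintype.ofFinite β
  let e := (Equiv.ofInjective g hg).symm.trans (Equiv.ofInjective f hf)
  refine ⟨e.extendSubtype, funext fun a => ?_⟩
  simp [Equiv.extendSubtype_apply_of_mem e (g a) ⟨a, rfl⟩, e]

section Gluing

open ProbabilityTheory

theorem MeasureTheory.Measure.map_compProd {α β γ : Type*} [MeasurableSpace α]
    [MeasurableSpace β] [MeasurableSpace γ] (μ : Measure α) [SFinite μ] (κ : Kernel β γ)
    [IsSFiniteKernel κ] {f : α → β} (hf : Measurable f) :
    μ.map f ⊗ₘ κ = (μ ⊗ₘ κ.comap f hf).map (Prod.map f id) := by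
  ext s hs
  rw [Measure.compProd_apply hs, lintegral_map (Kernel.measurable_kernel_prodMk_left hs) hf,
    Measure.map_apply (hf.prodMap measurable_id) hs,
    Measure.compProd_apply ((hf.prodMap measurable_id) hs)]
  rfl

lemma MeasureTheory.Measure.exists_map_prodMap_eq {ι α Ω : Type*} [MeasurableSpace ι]
    [MeasurableSpace α] [MeasurableSpace Ω] [StandardBorelSpace Ω] [Nonempty Ω]
    (U : Measure ι) [SFinite U] {z : ι → α} (hz : Measurable z) (π : Measure (α × Ω))
    [IsFiniteMeasure π] (h : π.map Prod.fst = U.map z) :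
    ∃ ρ : Measure (ι × Ω), ρ.map Prod.fst = U ∧ ρ.map (Prod.map z id) = π := by
  refine ⟨U ⊗ₘ π.condKernel.comap z hz, Measure.fst_compProd _ _, ?_⟩
  rw [← Measure.map_compProd, ← h]
  exact π.disintegrate π.condKernel

end Gluing

section Exchangeable

variable {Ω ι α E : Type*} [MeasurableSpace Ω] [MeasurableSpace E] [Finite ι] {P : Measure Ω}
  {Y : Ω → ι → E}

lemma map_comp_eq_of_exchangeable (hY : Measurable Y)
    (hexch : ∀ σ : Equiv.Perm ι, P.map (fun ω i => Y ω (σ i)) = P.map Y)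
    {f g : α → ι} (hf : f.Injective) (hg : g.Injective) :
    P.map (fun ω a => Y ω (f a)) = P.map (fun ω a => Y ω (g a)) := by
  obtain ⟨σ, hσ⟩ := Equiv.Perm.exists_comp_eq_of_injective hf hg
  have hproj : Measurable fun (y : ι → E) (a : α) => y (g a) := by fun_prop
  calc P.map (fun ω a => Y ω (f a))
      = (P.map fun ω i => Y ω (σ i)).map fun y a => y (g a) := by
        rw [Measure.map_map hproj (by fun_prop), ← hσ]
        rfl
    _ = (P.map Y).map fun y a => y (g a) := by rw [hexch]
    _ = _ := by rw [Measure.map_map hproj hY]; rfl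

lemma lintegral_comp_eq_of_exchangeable (hY : Measurable Y)
    (hexch : ∀ σ : Equiv.Perm ι, P.map (fun ω i => Y ω (σ i)) = P.map Y)
    {f g : α → ι} (hf : f.Injective) (hg : g.Injective) {F : (α → E) → ℝ≥0∞}
    (hF : Measurable F) :
    ∫⁻ ω, F (fun a => Y ω (f a)) ∂P = ∫⁻ y, F y ∂(P.map fun ω a => Y ω (g a)) := by
  rw [← map_comp_eq_of_exchangeable hY hexch hf hg, lintegral_map hF (by fun_prop)]

end Exchangeable

section Wasserstein

variable {p : ℝ}

lemma measurable_ofReal_abs_sub_rpow (p : ℝ) :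
    Measurable fun z : ℝ × ℝ => ENNReal.ofReal (|z.1 - z.2| ^ p) := by
  fun_prop

lemma WppR_le_lintegral {μ ν : Measure ℝ} (π : Measure (ℝ × ℝ))
    (h₁ : π.map Prod.fst = μ) (h₂ : π.map Prod.snd = ν) :
    WppR p μ ν ≤ ∫⁻ z, ENNReal.ofReal (|z.1 - z.2| ^ p) ∂π :=
  iInf₂_le π ⟨h₁, h₂⟩

lemma WppR_zero_zero : WppR p 0 0 = 0 :=
  nonpos_iff_eq_zero.1 <| (WppR_le_lintegral 0 (by simp) (by simp)).trans_eq (by simp)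

lemma WppR_add_le (μ₁ μ₂ ν₁ ν₂ : Measure ℝ) :
    WppR p (μ₁ + μ₂) (ν₁ + ν₂) ≤ WppR p μ₁ ν₁ + WppR p μ₂ ν₂ := by
  refine ENNReal.le_iInf₂_add_iInf₂ fun π₁ h₁ π₂ h₂ => ?_
  refine (WppR_le_lintegral (π₁ + π₂) ?_ ?_).trans_eq (lintegral_add_measure _ _ _)
  · rw [Measure.map_add _ _ measurable_fst, h₁.1, h₂.1]
  · rw [Measure.map_add _ _ measurable_snd, h₁.2, h₂.2]

lemma WppR_sum_le {ι : Type*} (s : Finset ι) (μ ν : ι → Measure ℝ) :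
    WppR p (∑ j ∈ s, μ j) (∑ j ∈ s, ν j) ≤ ∑ j ∈ s, WppR p (μ j) (ν j) := by
  classical
  induction s using Finset.induction_on with
  | empty => simp [WppR_zero_zero]
  | insert j s hj ih =>
    simp only [Finset.sum_insert hj]
    exact (WppR_add_le _ _ _ _).trans (add_le_add le_rfl ih)

lemma WppR_smul_le {c : ℝ≥0∞} (hc : c ≠ ∞) (μ ν : Measure ℝ) :
    WppR p (c • μ) (c • ν) ≤ c * WppR p μ ν := by
  rcases eq_or_ne c 0 with rfl | hc₀
  · simp [WppR_zero_zero]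
  calc WppR p (c • μ) (c • ν)
      ≤ ⨅ (π : Measure (ℝ × ℝ)) (_ : π.map Prod.fst = μ ∧ π.map Prod.snd = ν),
          c * ∫⁻ z, ENNReal.ofReal (|z.1 - z.2| ^ p) ∂π :=
        le_iInf₂ fun π h => (WppR_le_lintegral (c • π) (by rw [Measure.map_smul, h.1])
          (by rw [Measure.map_smul, h.2])).trans_eq (lintegral_smul_measure _ _)
    _ = c * WppR p μ ν := by simp only [WppR, ENNReal.mul_iInf_of_ne hc₀ hc]

lemma div_smul_empMeas (N m : ℕ) (x : Fin N → ℝ) :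
    ((N : ℝ≥0∞) / m) • empMeas N x =
      (m : ℝ≥0∞)⁻¹ • ∑ i, Measure.dirac (x i) := by
  rcases N.eq_zero_or_pos with rfl | hN
  · simp
  rw [empMeas, smul_smul, div_eq_mul_inv, mul_right_comm,
    ENNReal.mul_inv_cancel (by exact_mod_cast hN.ne') (ENNReal.natCast_ne_top N), one_mul]

section Blocks

variable {κ : Type*} [Fintype κ] {n ℓ m : ℕ}

lemma empMeas_eq_sum_blocks (e : (κ × Fin n) ⊕ Fin ℓ ≃ Fin m) (v : Fin m → ℝ) :
    empMeas m v = ∑ j, ((n : ℝ≥0∞) / m) • empMeas n (fun i => v (e (.inl (j, i))))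
      + ((ℓ : ℝ≥0∞) / m) • empMeas ℓ (fun i => v (e (.inr i))) := by
  simp only [div_smul_empMeas, ← Finset.smul_sum, ← smul_add]
  rw [empMeas, ← e.sum_comp, Fintype.sum_sum_type, Fintype.sum_prod_type]

lemma WppR_empMeas_le_sum_blocks (hm : m ≠ 0) (e : (κ × Fin n) ⊕ Fin ℓ ≃ Fin m)
    (v : Fin m → ℝ) (μ : Measure ℝ) :
    WppR p (empMeas m v) μ ≤
      ∑ j, (n : ℝ≥0∞) / m * WppR p (empMeas n (fun i => v (e (.inl (j, i))))) μ
      + (ℓ : ℝ≥0∞) / m * WppR p (empMeas ℓ (fun i => v (e (.inr i)))) μ := by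
  have hcard : (Fintype.card κ * n + ℓ : ℝ≥0∞) = m := by
    have := Fintype.card_congr e
    simp only [Fintype.card_sum, Fintype.card_prod, Fintype.card_fin] at this
    exact_mod_cast this
  have hdiv (N : ℕ) : (N : ℝ≥0∞) / m ≠ ∞ :=
    ENNReal.div_ne_top (by simp) (by exact_mod_cast hm)
  have hμ : μ = ∑ _j : κ, ((n : ℝ≥0∞) / m) • μ + ((ℓ : ℝ≥0∞) / m) • μ := by
    rw [Finset.sum_const, Finset.card_univ, ← Nat.cast_smul_eq_nsmul ℝ≥0∞, smul_smul,
      ← add_smul, ← mul_div_assoc, ENNReal.div_add_div_same, hcard,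
      ENNReal.div_self (by exact_mod_cast hm) (ENNReal.natCast_ne_top m), one_smul]
  calc WppR p (empMeas m v) μ
      = WppR p (∑ j, ((n : ℝ≥0∞) / m) • empMeas n (fun i => v (e (.inl (j, i))))
          + ((ℓ : ℝ≥0∞) / m) • empMeas ℓ (fun i => v (e (.inr i))))
          (∑ _j : κ, ((n : ℝ≥0∞) / m) • μ + ((ℓ : ℝ≥0∞) / m) • μ) := by
        rw [← hμ, ← empMeas_eq_sum_blocks]
    _ ≤ _ := by
        refine (WppR_add_le _ _ _ _).trans (add_le_add ((WppR_sum_le _ _ _).trans ?_) ?_)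
        · exact Finset.sum_le_sum fun j _ => WppR_smul_le (hdiv _) _ _
        · exact WppR_smul_le (hdiv _) _ _

end Blocks

lemma rpow_inv_WppR_map_le_of_coupling (hp : 1 ≤ p) {ι : Type*} [MeasurableSpace ι]
    (U : Measure ι) [SFinite U] {y z : ι → ℝ} (hy : Measurable y) (hz : Measurable z)
    {μ : Measure ℝ} [IsFiniteMeasure μ] (π : Measure (ℝ × ℝ))
    (h₁ : π.map Prod.fst = U.map z) (h₂ : π.map Prod.snd = μ) :
    WppR p (U.map y) μ ^ p⁻¹ ≤ (∫⁻ i, ENNReal.ofReal (|y i - z i| ^ p) ∂U) ^ p⁻¹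
      + (∫⁻ w, ENNReal.ofReal (|w.1 - w.2| ^ p) ∂π) ^ p⁻¹ := by
  have hp₀ : 0 < p := by linarith
  have : IsFiniteMeasure π := by
    have : IsFiniteMeasure (π.map Prod.snd) := h₂ ▸ inferInstance
    exact Measure.isFiniteMeasure_of_map measurable_snd.aemeasurable
  obtain ⟨ρ, hρU, hρ⟩ := Measure.exists_map_prodMap_eq U hz π h₁
  have hyid : Measurable fun x : ι × ℝ => (y x.1, x.2) := by fun_prop
  have hρ₁ : (ρ.map fun x => (y x.1, x.2)).map Prod.fst = U.map y := by
    rw [Measure.map_map measurable_fst hyid, ← hρU, Measure.map_map hy measurable_fst]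
    rfl
  have hρ₂ : (ρ.map fun x => (y x.1, x.2)).map Prod.snd = μ := by
    rw [← h₂, ← hρ, Measure.map_map measurable_snd hyid,
      Measure.map_map measurable_snd (hz.prodMap measurable_id)]
    rfl
  set F : ι × ℝ → ℝ≥0∞ := fun x => ENNReal.ofReal |y x.1 - z x.1|
  set G : ι × ℝ → ℝ≥0∞ := fun x => ENNReal.ofReal |z x.1 - x.2|
  have hF : ∫⁻ x, F x ^ p ∂ρ = ∫⁻ i, ENNReal.ofReal (|y i - z i| ^ p) ∂U := by
    rw [← hρU, lintegral_map (by fun_prop) measurable_fst]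
    simp only [F, ENNReal.ofReal_rpow_of_nonneg (abs_nonneg _) hp₀.le]
  have hG : ∫⁻ x, G x ^ p ∂ρ = ∫⁻ w, ENNReal.ofReal (|w.1 - w.2| ^ p) ∂π := by
    rw [← hρ, lintegral_map (measurable_ofReal_abs_sub_rpow p) (hz.prodMap measurable_id)]
    simp only [G, ENNReal.ofReal_rpow_of_nonneg (abs_nonneg _) hp₀.le]
    rfl
  have hcost : WppR p (U.map y) μ ≤ ∫⁻ x, (F + G) x ^ p ∂ρ := by
    refine (WppR_le_lintegral _ hρ₁ hρ₂).trans ?_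
    rw [lintegral_map (measurable_ofReal_abs_sub_rpow p) hyid]
    refine lintegral_mono fun x => ?_
    rw [← ENNReal.ofReal_rpow_of_nonneg (abs_nonneg _) hp₀.le, Pi.add_apply,
      ← ENNReal.ofReal_add (abs_nonneg _) (abs_nonneg _)]
    gcongr
    exact abs_sub_le _ _ _
  calc WppR p (U.map y) μ ^ p⁻¹ ≤ (∫⁻ x, (F + G) x ^ p ∂ρ) ^ p⁻¹ := by gcongr
    _ ≤ (∫⁻ x, F x ^ p ∂ρ) ^ p⁻¹ + (∫⁻ x, G x ^ p ∂ρ) ^ p⁻¹ := by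
      simpa only [one_div] using ENNReal.lintegral_Lp_add_le (by fun_prop) (by fun_prop) hp
    _ = _ := by rw [hF, hG]

lemma rpow_inv_WppR_map_le (hp : 1 ≤ p) {ι : Type*} [MeasurableSpace ι]
    (U : Measure ι) [SFinite U] {y z : ι → ℝ} (hy : Measurable y) (hz : Measurable z)
    (μ : Measure ℝ) [IsFiniteMeasure μ] :
    WppR p (U.map y) μ ^ p⁻¹ ≤ (∫⁻ i, ENNReal.ofReal (|y i - z i| ^ p) ∂U) ^ p⁻¹
      + WppR p (U.map z) μ ^ p⁻¹ := by
  calc WppR p (U.map y) μ ^ p⁻¹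
      ≤ ⨅ (π : Measure (ℝ × ℝ)) (_ : π.map Prod.fst = U.map z ∧ π.map Prod.snd = μ),
          (∫⁻ i, ENNReal.ofReal (|y i - z i| ^ p) ∂U) ^ p⁻¹
            + (∫⁻ w, ENNReal.ofReal (|w.1 - w.2| ^ p) ∂π) ^ p⁻¹ :=
        le_iInf₂ fun π h => rpow_inv_WppR_map_le_of_coupling hp U hy hz π h.1 h.2
    _ = _ := by
      simp only [WppR, ENNReal.iInf_rpow _ (inv_pos.2 (zero_lt_one.trans_le hp)),
        ENNReal.add_iInf]

lemma empMeas_eq_map (N : ℕ) (x : Fin N → ℝ) :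
    empMeas N x = ((N : ℝ≥0∞)⁻¹ • Measure.count).map x := by
  rw [Measure.map_smul, Measure.count, Measure.map_sum (by fun_prop), Measure.sum_fintype]
  simp only [Measure.map_dirac' (by fun_prop : Measurable x), empMeas]

lemma lintegral_ofReal_uniform {N : ℕ} {f : Fin N → ℝ} (hf : 0 ≤ f) :
    ∫⁻ i, ENNReal.ofReal (f i) ∂((N : ℝ≥0∞)⁻¹ • Measure.count) =
      ENNReal.ofReal ((N : ℝ)⁻¹ * ∑ i, f i) := by
  rcases N.eq_zero_or_pos with rfl | hN
  · simp
  rw [lintegral_smul_measure, lintegral_count, tsum_fintype, smul_eq_mul,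
    ENNReal.ofReal_mul (by positivity), ENNReal.ofReal_sum_of_nonneg fun i _ => hf i,
    ENNReal.ofReal_inv_of_pos (by exact_mod_cast hN), ENNReal.ofReal_natCast]

lemma rpow_inv_WppR_empMeas_le (hp : 1 ≤ p) {N : ℕ} (y z : Fin N → ℝ)
    (μ : Measure ℝ) [IsFiniteMeasure μ] :
    WppR p (empMeas N y) μ ^ p⁻¹ ≤
      ENNReal.ofReal ((N : ℝ)⁻¹ * ∑ i, |y i - z i| ^ p) ^ p⁻¹
      + WppR p (empMeas N z) μ ^ p⁻¹ := by
  have h := rpow_inv_WppR_map_le hp ((N : ℝ≥0∞)⁻¹ • Measure.count) (y := y) (z := z)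
    (by fun_prop) (by fun_prop) μ
  rwa [lintegral_ofReal_uniform (f := fun i => |y i - z i| ^ p) fun i => by positivity,
    ← empMeas_eq_map, ← empMeas_eq_map] at h

lemma WppR_empMeas_le (hp : 1 ≤ p) {N : ℕ} (y z : Fin N → ℝ)
    (μ : Measure ℝ) [IsFiniteMeasure μ] :
    WppR p (empMeas N y) μ ≤ ENNReal.ofReal (2 ^ (p - 1)) *
      (ENNReal.ofReal ((N : ℝ)⁻¹ * ∑ i, |y i - z i| ^ p) + WppR p (empMeas N z) μ) := by
  have hp₀ : p ≠ 0 := by positivity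
  rw [← ENNReal.ofReal_rpow_of_pos two_pos, ENNReal.ofReal_ofNat]
  calc WppR p (empMeas N y) μ = (WppR p (empMeas N y) μ ^ p⁻¹) ^ p :=
        (ENNReal.rpow_inv_rpow hp₀ _).symm
    _ ≤ (ENNReal.ofReal ((N : ℝ)⁻¹ * ∑ i, |y i - z i| ^ p) ^ p⁻¹
          + WppR p (empMeas N z) μ ^ p⁻¹) ^ p := by
        gcongr
        exact rpow_inv_WppR_empMeas_le hp y z μ
    _ ≤ _ := by
        refine (ENNReal.rpow_add_le_mul_rpow_add_rpow _ _ hp).trans_eq ?_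
        rw [ENNReal.rpow_inv_rpow hp₀, ENNReal.rpow_inv_rpow hp₀]

lemma measurable_WppR_empMeas (hp : 1 ≤ p) (N : ℕ) (μ : Measure ℝ) [IsFiniteMeasure μ] :
    Measurable fun y : Fin N → ℝ => WppR p (empMeas N y) μ := by
  have hp₀ : 0 < p := by positivity
  have husc : UpperSemicontinuous fun y : Fin N → ℝ => WppR p (empMeas N y) μ ^ p⁻¹ := by
    intro z a ha
    have hcont : Continuous fun y : Fin N → ℝ =>
        ENNReal.ofReal ((N : ℝ)⁻¹ * ∑ i, |y i - z i| ^ p) ^ p⁻¹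
          + WppR p (empMeas N z) μ ^ p⁻¹ := by
      refine (ENNReal.continuous_rpow_const.comp (ENNReal.continuous_ofReal.comp ?_)).add
        continuous_const
      exact continuous_const.mul (continuous_finsetSum _ fun i _ =>
        (Real.continuous_rpow_const hp₀.le).comp (by fun_prop))
    have hlim : ENNReal.ofReal ((N : ℝ)⁻¹ * ∑ i, |z i - z i| ^ p) ^ p⁻¹
        + WppR p (empMeas N z) μ ^ p⁻¹ < a := by
      simpa [Real.zero_rpow hp₀.ne', ENNReal.zero_rpow_of_pos (inv_pos.2 hp₀)] using ha
    filter_upwards [hcont.continuousAt.eventually_lt continuousAt_const hlim] with y hy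
    exact (rpow_inv_WppR_empMeas_le hp y z μ).trans_lt hy
  have := (ENNReal.continuous_rpow_const (y := p)).measurable.comp husc.measurable
  simpa only [Function.comp_def, ENNReal.rpow_inv_rpow hp₀.ne'] using this

lemma lintegral_WppR_empMeas_le (hp : 1 ≤ p) (N : ℕ) (μ : Measure ℝ) [IsFiniteMeasure μ]
    (L : Measure (Fin N → ℝ)) :
    ∫⁻ y, WppR p (empMeas N y) μ ∂L ≤
      ENNReal.ofReal (2 ^ (p - 1)) * (WppVec p N L (Measure.pi fun _ => μ) + epsNp p N μ) := by
  set c := ENNReal.ofReal (2 ^ (p - 1))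
  have hc₀ : c ≠ 0 := by positivity
  have hW := measurable_WppR_empMeas hp N μ
  simp only [WppVec, ENNReal.iInf_add, ENNReal.mul_iInf_of_ne hc₀ ENNReal.ofReal_ne_top]
  refine le_iInf₂ fun π ⟨h₁, h₂⟩ => ?_
  calc ∫⁻ y, WppR p (empMeas N y) μ ∂L = ∫⁻ w, WppR p (empMeas N w.1) μ ∂π := by
        rw [← h₁, lintegral_map hW measurable_fst]
    _ ≤ ∫⁻ w, c * (ENNReal.ofReal ((N : ℝ)⁻¹ * ∑ i, |w.1 i - w.2 i| ^ p)
          + WppR p (empMeas N w.2) μ) ∂π :=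
        lintegral_mono fun w => WppR_empMeas_le hp w.1 w.2 μ
    _ = c * (∫⁻ w, ENNReal.ofReal ((N : ℝ)⁻¹ * ∑ i, |w.1 i - w.2 i| ^ p) ∂π
          + ∫⁻ w, WppR p (empMeas N w.2) μ ∂π) := by
        rw [lintegral_const_mul' _ _ ENNReal.ofReal_ne_top, lintegral_add_left (by fun_prop)]
    _ = _ := by rw [epsNp, ← h₂, lintegral_map hW measurable_snd]

lemma lintegral_WppR_empMeas_le_of_exchangeable {Ω : Type*} [MeasurableSpace Ω]
    (P : Measure Ω) (hp : 1 ≤ p) {k n ℓ m : ℕ} (hm : m = k * n + ℓ) (hm₀ : m ≠ 0)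
    (hnm : n ≤ m) (hℓm : ℓ ≤ m) {Y : Ω → Fin m → ℝ} (hY : Measurable Y)
    (hexch : ∀ σ : Equiv.Perm (Fin m), P.map (fun ω i => Y ω (σ i)) = P.map Y)
    (μ : Measure ℝ) [IsFiniteMeasure μ] :
    ∫⁻ ω, WppR p (empMeas m (Y ω)) μ ∂P ≤
      ((k * n : ℕ) : ℝ≥0∞) / m * ∫⁻ y, WppR p (empMeas n y) μ
          ∂(P.map fun ω i => Y ω (Fin.castLE hnm i))
        + (ℓ : ℝ≥0∞) / m * ∫⁻ y, WppR p (empMeas ℓ y) μ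
          ∂(P.map fun ω i => Y ω (Fin.castLE hℓm i)) := by
  let e : (Fin k × Fin n) ⊕ Fin ℓ ≃ Fin m :=
    (Equiv.sumCongr finProdFinEquiv (Equiv.refl _)).trans (finSumFinEquiv.trans (finCongr hm.symm))
  have hWn := measurable_WppR_empMeas hp n μ
  have hWℓ := measurable_WppR_empMeas hp ℓ μ
  have hblock (j : Fin k) : ∫⁻ ω, WppR p (empMeas n fun i => Y ω (e (.inl (j, i)))) μ ∂P
      = ∫⁻ y, WppR p (empMeas n y) μ ∂(P.map fun ω i => Y ω (Fin.castLE hnm i)) :=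
    lintegral_comp_eq_of_exchangeable hY hexch
      (e.injective.comp (Sum.inl_injective.comp (Prod.mk_right_injective j)))
      (Fin.castLE_injective hnm) hWn
  have htail : ∫⁻ ω, WppR p (empMeas ℓ fun i => Y ω (e (.inr i))) μ ∂P
      = ∫⁻ y, WppR p (empMeas ℓ y) μ ∂(P.map fun ω i => Y ω (Fin.castLE hℓm i)) :=
    lintegral_comp_eq_of_exchangeable hY hexch (e.injective.comp Sum.inr_injective)
      (Fin.castLE_injective hℓm) hWℓ
  calc ∫⁻ ω, WppR p (empMeas m (Y ω)) μ ∂P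
      ≤ ∫⁻ ω, (∑ j, (n : ℝ≥0∞) / m *
            WppR p (empMeas n fun i => Y ω (e (.inl (j, i)))) μ
          + (ℓ : ℝ≥0∞) / m * WppR p (empMeas ℓ fun i => Y ω (e (.inr i))) μ) ∂P :=
        lintegral_mono fun ω => WppR_empMeas_le_sum_blocks hm₀ e (Y ω) μ
    _ = ∑ j : Fin k, (n : ℝ≥0∞) / m * ∫⁻ y, WppR p (empMeas n y) μ
          ∂(P.map fun ω i => Y ω (Fin.castLE hnm i))
        + (ℓ : ℝ≥0∞) / m * ∫⁻ y, WppR p (empMeas ℓ y) μ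
          ∂(P.map fun ω i => Y ω (Fin.castLE hℓm i)) := by
        have hWblock (j : Fin k) : Measurable fun ω =>
            WppR p (empMeas n fun i => Y ω (e (.inl (j, i)))) μ := hWn.comp (by fun_prop)
        have hWtail : Measurable fun ω => WppR p (empMeas ℓ fun i => Y ω (e (.inr i))) μ :=
          hWℓ.comp (by fun_prop)
        rw [lintegral_add_left (Finset.measurable_sum _ fun j _ => (hWblock j).const_mul _),
          lintegral_finsetSum _ fun j _ => (hWblock j).const_mul _,
          lintegral_const_mul _ hWtail, htail]
        simp only [lintegral_const_mul _ (hWblock _), hblock]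
    _ = _ := by
        rw [Finset.sum_const, Finset.card_univ, Fintype.card_fin, nsmul_eq_mul, Nat.cast_mul,
          ← mul_assoc, mul_div_assoc]

end Wasserstein

theorem stmt10_general {Ω : Type*} [MeasurableSpace Ω] (ℙ : Measure Ω)
    (k n ℓ m : ℕ) (hn : 0 < n) (hm : m = k * n + ℓ)
    (hnm : n ≤ m) (hℓm : ℓ ≤ m)
    (Y : Ω → Fin m → ℝ) (hY : Measurable Y)
    (hexch : ∀ σ : Equiv.Perm (Fin m),
      Measure.map (fun ω => fun i : Fin m => Y ω (σ i)) ℙ = Measure.map Y ℙ)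
    (p : ℝ) (hp : 1 ≤ p)
    (μ : Measure ℝ) [IsProbabilityMeasure μ] :
    (ENNReal.ofReal ((2 : ℝ) ^ (p - 1)))⁻¹ * ∫⁻ ω, WppR p (empMeas m (Y ω)) μ ∂ℙ
      ≤ (((k * n : ℕ) : ℝ≥0∞) / (m : ℝ≥0∞)) *
          (WppVec p n
            (Measure.map (fun ω => fun i : Fin n => Y ω (Fin.castLE hnm i)) ℙ)
            (Measure.pi fun _ : Fin n => μ)
           + epsNp p n μ)
        + ((ℓ : ℝ≥0∞) / (m : ℝ≥0∞)) *
          (WppVec p ℓ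
            (Measure.map (fun ω => fun i : Fin ℓ => Y ω (Fin.castLE hℓm i)) ℙ)
            (Measure.pi fun _ : Fin ℓ => μ)
           + epsNp p ℓ μ) := by
  rw [ENNReal.inv_mul_le_iff (by positivity) ENNReal.ofReal_ne_top]
  calc ∫⁻ ω, WppR p (empMeas m (Y ω)) μ ∂ℙ
      ≤ ((k * n : ℕ) : ℝ≥0∞) / m * ∫⁻ y, WppR p (empMeas n y) μ
          ∂(ℙ.map fun ω i => Y ω (Fin.castLE hnm i))
        + (ℓ : ℝ≥0∞) / m * ∫⁻ y, WppR p (empMeas ℓ y) μ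
          ∂(ℙ.map fun ω i => Y ω (Fin.castLE hℓm i)) :=
        lintegral_WppR_empMeas_le_of_exchangeable ℙ hp hm (by omega) hnm hℓm hY hexch μ
    _ ≤ _ := by
        grw [lintegral_WppR_empMeas_le hp n μ, lintegral_WppR_empMeas_le hp ℓ μ]
        exact le_of_eq (by ring)

/-- Lemma 6 of the paper in full generality. For an exchangeable vector
`Y ∈ ℝᵐ`, `μ ∈ P(ℝ)` with finite `p`-th moments, and `m = k·n + ℓ` with `0 ≤ ℓ ≤ n-1`,
`(1/2^{p-1})·E[W_p^p(μ̂_Y, μ)] ≤ (kn/m)·(W_p^p(Lawⁿ(Y), μ^{⊗n}) + ε_{n,p}(μ))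
  + (ℓ/m)·(W_p^p(Lawˡ(Y), μ^{⊗ℓ}) + ε_{ℓ,p}(μ))`. -/
theorem stmt10 {Ω : Type*} [MeasurableSpace Ω] (ℙ : Measure Ω) [IsProbabilityMeasure ℙ]
    (k n ℓ m : ℕ) (hn : 0 < n) (hℓ : ℓ ≤ n - 1) (hm : m = k * n + ℓ)
    (hnm : n ≤ m) (hℓm : ℓ ≤ m)
    (Y : Ω → Fin m → ℝ) (hY : Measurable Y)
    (hexch : ∀ σ : Equiv.Perm (Fin m),
      Measure.map (fun ω => fun i : Fin m => Y ω (σ i)) ℙ = Measure.map Y ℙ)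
    (p : ℝ) (hp : 1 ≤ p)
    (hYmom : ∀ i, Integrable (fun ω => |Y ω i| ^ p) ℙ)
    (μ : Measure ℝ) [IsProbabilityMeasure μ]
    (hμ : Integrable (fun u => |u| ^ p) μ) :
    (ENNReal.ofReal ((2 : ℝ) ^ (p - 1)))⁻¹ * ∫⁻ ω, WppR p (empMeas m (Y ω)) μ ∂ℙ
      ≤ (((k * n : ℕ) : ℝ≥0∞) / (m : ℝ≥0∞)) *
          (WppVec p n
            (Measure.map (fun ω => fun i : Fin n => Y ω (Fin.castLE hnm i)) ℙ)
            (Measure.pi fun _ : Fin n => μ)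
           + epsNp p n μ)
        + ((ℓ : ℝ≥0∞) / (m : ℝ≥0∞)) *
          (WppVec p ℓ
            (Measure.map (fun ω => fun i : Fin ℓ => Y ω (Fin.castLE hℓm i)) ℙ)
            (Measure.pi fun _ : Fin ℓ => μ)
           + epsNp p ℓ μ) :=
  stmt10_general ℙ k n ℓ m hn hm hnm hℓm Y hY hexch p hp μ
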